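/- arXiv:2304.12109 — 5 statements merged into one kernel-verified Lean document; each statement's English description precedes it below -/
import Mathlib

section
/- For every nonnegative integer k, there exists a tournament F on 2^{3k} vertices such that for every subset S of the vertices with |S| = k, there is a vertex v with a directed edge from v to every vertex in S. -/
open Finset

namespace DomTour

variable {n : ℕ}

/-- Edge relation of the tournament encoded by `g`. -/
def eRel (g : Fin n → Fin n → Bool) (a b : Fin n) : Prop :=
  if a < b then g a b = true else if b < a then g b a = false else False

instance (g : Fin n → Fin n → Bool) (a b : Fin n) : Decidable (eRel g a b) := by
  unfold eRel; infer_instance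

lemma eRel_irrefl (g : Fin n → Fin n → Bool) (a : Fin n) : ¬ eRel g a a := by
  simp [eRel]

lemma eRel_asymm (g : Fin n → Fin n → Bool) {a b : Fin n} (h : a ≠ b) :
    eRel g a b ↔ ¬ eRel g b a := by
  rcases lt_or_gt_of_ne h with hlt | hgt
  · simp [eRel, hlt, asymm hlt, lt_irrefl]
  · simp [eRel, hgt, asymm hgt, lt_irrefl]

/-- Projection to the edges between `Sᶜ` and `S`; `phi S g v s = true` iff `v` beats `s`. -/
def phi (S : Finset (Fin n)) (g : Fin n → Fin n → Bool)
    (v : {v : Fin n // v ∉ S}) (s : {s : Fin n // s ∈ S}) : Bool :=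
  if (v : Fin n) < (s : Fin n) then g v s else !(g s v)

lemma eRel_iff_phi (S : Finset (Fin n)) (g : Fin n → Fin n → Bool)
    (v : {v : Fin n // v ∉ S}) (s : {s : Fin n // s ∈ S}) :
    eRel g v s ↔ phi S g v s = true := by
  have hne : (v : Fin n) ≠ (s : Fin n) := fun h => v.2 (h ▸ s.2)
  rcases lt_or_gt_of_ne hne with hlt | hgt
  · simp [eRel, phi, hlt]
  · simp [eRel, phi, hgt, asymm hgt]

/-- Rewrite the edges between `Sᶜ` and `S` according to `h`, keep all other coordinates. -/
def modify (S : Finset (Fin n)) (h : {v : Fin n // v ∉ S} → {s : Fin n // s ∈ S} → Bool)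
    (g : Fin n → Fin n → Bool) : Fin n → Fin n → Bool := fun a b =>
  if hab : a < b then
    if ha : a ∈ S then
      if hb : b ∈ S then g a b
      else !(h ⟨b, hb⟩ ⟨a, ha⟩)
    else
      if hb : b ∈ S then h ⟨a, ha⟩ ⟨b, hb⟩
      else g a b
  else g a b

lemma phi_modify (S : Finset (Fin n)) (h : {v : Fin n // v ∉ S} → {s : Fin n // s ∈ S} → Bool)
    (g : Fin n → Fin n → Bool) : phi S (modify S h g) = h := by
  funext v s
  have hne : (v : Fin n) ≠ (s : Fin n) := fun he => v.2 (he ▸ s.2)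
  rcases lt_or_gt_of_ne hne with hlt | hgt
  · simp [phi, modify, hlt, v.2, s.2]
  · simp [phi, modify, hgt, asymm hgt, v.2, s.2]

lemma modify_modify (S : Finset (Fin n))
    (h h' : {v : Fin n // v ∉ S} → {s : Fin n // s ∈ S} → Bool)
    (g : Fin n → Fin n → Bool) : modify S h' (modify S h g) = modify S h' g := by
  funext a b
  unfold modify
  by_cases hab : a < b <;> by_cases ha : a ∈ S <;> by_cases hb : b ∈ S <;> simp [hab, ha, hb]

lemma modify_phi (S : Finset (Fin n)) (g : Fin n → Fin n → Bool) :
    modify S (phi S g) g = g := by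
  funext a b
  unfold modify phi
  by_cases hab : a < b <;> by_cases ha : a ∈ S <;> by_cases hb : b ∈ S <;>
    simp [hab, ha, hb, asymm, not_lt_of_gt]

/-- Key counting step: the set of `g` for which no vertex dominates `S`, times the number of
possible "cross patterns", is at most the number of bad cross patterns times all `g`. -/
lemma bad_card (S : Finset (Fin n)) :
    ((univ : Finset (Fin n → Fin n → Bool)).filter
        (fun g => ¬ ∃ v, ∀ s ∈ S, eRel g v s)).card
      * Fintype.card ({v : Fin n // v ∉ S} → {s : Fin n // s ∈ S} → Bool)
    ≤ (2 ^ S.card - 1) ^ (n - S.card)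
      * Fintype.card (Fin n → Fin n → Bool) := by
  classical
  set H := ({v : Fin n // v ∉ S} → {s : Fin n // s ∈ S} → Bool)
  set Bad := (univ : Finset (Fin n → Fin n → Bool)).filter
      (fun g => ¬ ∃ v, ∀ s ∈ S, eRel g v s) with hBad
  set T := (univ : Finset H).filter (fun h => ∀ v, ¬ (h v = fun _ => true)) with hT
  -- cardinality of T
  have hTcard : T.card = (2 ^ S.card - 1) ^ (n - S.card) := by
    have h1 : T.card = Fintype.card {h : H // ∀ v, ¬ (h v = fun _ => true)} := by
      rw [Fintype.card_subtype]
    rw [h1, Fintype.card_congr (Equiv.subtypePiEquivPi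
      (p := fun (_ : {v : Fin n // v ∉ S}) (f : {s : Fin n // s ∈ S} → Bool) =>
        ¬ (f = fun _ => true)))]
    rw [Fintype.card_pi]
    have hone : ∀ v : {v : Fin n // v ∉ S},
        Fintype.card {f : {s : Fin n // s ∈ S} → Bool // ¬ (f = fun _ => true)}
          = 2 ^ S.card - 1 := by
      intro v
      have h2 := Fintype.card_subtype_compl
        (fun f : {s : Fin n // s ∈ S} → Bool => f = fun _ => true)
      rw [Fintype.card_subtype_eq, Fintype.card_fun, Fintype.card_bool,
        Fintype.card_coe] at h2
      exact h2
    calc ∏ v : {v : Fin n // v ∉ S},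
          Fintype.card {f : {s : Fin n // s ∈ S} → Bool // ¬ (f = fun _ => true)}
        = ∏ _v : {v : Fin n // v ∉ S}, (2 ^ S.card - 1) := by
          exact Finset.prod_congr rfl (fun v _ => hone v)
      _ = (2 ^ S.card - 1) ^ Fintype.card {v : Fin n // v ∉ S} := by
          rw [Finset.prod_const, Finset.card_univ]
      _ = (2 ^ S.card - 1) ^ (n - S.card) := by
          rw [Fintype.card_subtype_compl, Fintype.card_coe, Fintype.card_fin]
  -- the injection
  have hinj : (Bad ×ˢ (univ : Finset H)).card
      ≤ (T ×ˢ (univ : Finset (Fin n → Fin n → Bool))).card := by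
    apply Finset.card_le_card_of_injOn
      (fun p => (phi S p.1, modify S p.2 p.1))
    · rintro ⟨g, h⟩ hg
      simp only [Finset.mem_coe, Finset.mem_product, hBad, Finset.mem_filter, Finset.mem_univ, true_and] at hg ⊢
      rw [hT, Finset.mem_filter]
      refine ⟨⟨Finset.mem_univ _, fun v hv => ?_⟩, trivial⟩
      exact hg.1 ⟨v.1, fun s hs => (eRel_iff_phi S g v ⟨s, hs⟩).2 (by rw [hv])⟩
    · rintro ⟨g1, h1⟩ _ ⟨g2, h2⟩ _ heq
      simp only [Prod.mk.injEq] at heq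
      obtain ⟨hphi, hmod⟩ := heq
      have hh : h1 = h2 := by
        rw [← phi_modify S h1 g1, hmod, phi_modify]
      have hg : g1 = g2 := by
        have e1 : modify S (phi S g1) (modify S h1 g1) = g1 := by
          rw [modify_modify, modify_phi]
        have e2 : modify S (phi S g2) (modify S h2 g2) = g2 := by
          rw [modify_modify, modify_phi]
        rw [← e1, hphi, hmod, e2]
      simp [hh, hg]
  rw [Finset.card_product, Finset.card_product, Finset.card_univ, Finset.card_univ,
    hTcard] at hinj
  exact hinj

end DomTour

/-- `(a+1)^(m+1) ≥ a^(m+1) + (m+1) * a^m`. -/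
lemma dom_binom_aux (a : ℕ) : ∀ m : ℕ, a ^ (m+1) + (m+1) * a ^ m ≤ (a+1) ^ (m+1) := by
  intro m
  induction m with
  | zero => simp [pow_succ]
  | succ m ih =>
    have : (a+1) ^ (m+2) = (a+1) * (a+1) ^ (m+1) := by ring
    rw [this]
    calc a ^ (m+2) + (m+2) * a ^ (m+1)
        ≤ (a+1) * (a ^ (m+1) + (m+1) * a ^ m) := by
          have e1 : (a+1) * (a ^ (m+1) + (m+1) * a ^ m)
              = a ^ (m+2) + (m+2) * a ^ (m+1) + (m+1) * a ^ m := by ring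
          omega
      _ ≤ (a+1) * (a+1) ^ (m+1) := Nat.mul_le_mul_left _ ih

lemma dom_two_mul_le {q : ℕ} (hq : 2 ≤ q) : 2 * (q - 1) ^ q ≤ q ^ q := by
  obtain ⟨p, rfl⟩ : ∃ p, q = p + 1 := ⟨q - 1, by omega⟩
  have hp : 1 ≤ p := by omega
  simp only [Nat.add_sub_cancel]
  calc 2 * p ^ (p+1) = p ^ (p+1) + p * p ^ p := by ring
    _ ≤ p ^ (p+1) + (p+1) * p ^ p := by nlinarith [pow_pos (by omega : 0 < p) p]
    _ ≤ (p+1) ^ (p+1) := dom_binom_aux p p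

lemma dom_size (k : ℕ) (hk : 1 ≤ k) : 3 * k * k * 2 ^ k + k + 1 ≤ 8 ^ k := by
  induction k with
  | zero => omega
  | succ k ih =>
    rcases Nat.eq_or_lt_of_le hk with h | h
    · simp [← h]
    · have hk1 : 1 ≤ k := by omega
      have ih' := ih hk1
      have h2 : (0:ℕ) < 2 ^ k := pow_pos (by norm_num) k
      have e8 : (8:ℕ) ^ (k+1) = 8 * 8 ^ k := by ring
      have e2 : (2:ℕ) ^ (k+1) = 2 * 2 ^ k := by ring
      rw [e8, e2]
      have h3 : 3 * (k+1) * (k+1) * (2 * 2 ^ k) ≤ 24 * (k * k * 2 ^ k) := by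
        have h4 : 3 * (k+1) * (k+1) * 2 ≤ 24 * (k * k) := by nlinarith
        calc 3 * (k+1) * (k+1) * (2 * 2 ^ k) = (3 * (k+1) * (k+1) * 2) * 2 ^ k := by ring
          _ ≤ (24 * (k * k)) * 2 ^ k := Nat.mul_le_mul_right _ h4
          _ = 24 * (k * k * 2 ^ k) := by ring
      have h5 : 3 * k * k * 2 ^ k = k * k * 2 ^ k * 3 := by ring
      omega

lemma dom_key_ineq (k : ℕ) :
    (2 ^ (3 * k)).choose k * (2 ^ k - 1) ^ (2 ^ (3 * k) - k)
      < (2 ^ k) ^ (2 ^ (3 * k) - k) := by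
  rcases Nat.eq_zero_or_pos k with rfl | hk
  · norm_num
  set q := 2 ^ k with hqdef
  set t := 3 * k * k with htdef
  set m := 2 ^ (3 * k) - k with hmdef
  have hq2 : 2 ≤ q := by
    have : 2 ^ 1 ≤ 2 ^ k := Nat.pow_le_pow_right (by norm_num) hk
    simpa using this
  have h8 : (2:ℕ) ^ (3 * k) = 8 ^ k := by
    rw [show (8:ℕ) = 2 ^ 3 from rfl, ← pow_mul]
  have hqt : q * t = 3 * k * k * 2 ^ k := by rw [hqdef, htdef]; ring
  have hm : q * t + 1 ≤ m := by
    have := dom_size k hk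
    have hkle : k ≤ 2 ^ (3 * k) := by
      rw [h8]
      exact le_of_lt (Nat.lt_pow_self (by norm_num : 1 < 8))
    omega
  obtain ⟨r, hr⟩ : ∃ r, m = q * t + r := ⟨m - q * t, by omega⟩
  have hr1 : 1 ≤ r := by omega
  -- choose bound
  have hchoose : (2 ^ (3 * k)).choose k ≤ 2 ^ t := by
    calc (2 ^ (3 * k)).choose k ≤ (2 ^ (3 * k)) ^ k := Nat.choose_le_pow _ _
      _ = 2 ^ t := by rw [← pow_mul]
  have hmain : 2 ^ t * (q - 1) ^ m < q ^ m := by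
    have h1 : 2 * (q - 1) ^ q ≤ q ^ q := dom_two_mul_le hq2
    calc 2 ^ t * (q - 1) ^ m
        = (2 * (q - 1) ^ q) ^ t * (q - 1) ^ r := by
          rw [hr, mul_pow, ← pow_mul, pow_add]; ring
      _ ≤ (q ^ q) ^ t * (q - 1) ^ r :=
          Nat.mul_le_mul_right _ (Nat.pow_le_pow_left h1 t)
      _ < (q ^ q) ^ t * q ^ r :=
          mul_lt_mul_of_pos_left
            (Nat.pow_lt_pow_left (by omega) (by omega))
            (pow_pos (pow_pos (by omega) q) t)
      _ = q ^ m := by rw [hr, pow_add, ← pow_mul]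
  calc (2 ^ (3 * k)).choose k * (2 ^ k - 1) ^ m
      ≤ 2 ^ t * (q - 1) ^ m := Nat.mul_le_mul_right _ hchoose
    _ < q ^ m := hmain

/-- For every nonnegative integer `k` there is a tournament on `2^(3k)` vertices such that
every `k`-subset `S` of vertices is dominated by some vertex (which has a directed edge
toward every vertex of `S`). -/
theorem exists_dominating_tournament (k : ℕ) :
    ∃ E : Fin (2 ^ (3 * k)) → Fin (2 ^ (3 * k)) → Prop,
      (∀ a, ¬ E a a) ∧
      (∀ a b, a ≠ b → (E a b ↔ ¬ E b a)) ∧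
      (∀ S : Finset (Fin (2 ^ (3 * k))), S.card = k → ∃ v, ∀ s ∈ S, E v s) := by
  classical
  set n := 2 ^ (3 * k) with hn
  have hgood : ∃ g : Fin n → Fin n → Bool, ∀ S : Finset (Fin n), S.card = k →
      ∃ v, ∀ s ∈ S, DomTour.eRel g v s := by
    by_contra hcon
    push_neg at hcon
    -- every g lies in some Bad S
    have hsub : (univ : Finset (Fin n → Fin n → Bool)) ⊆
        (Finset.powersetCard k (univ : Finset (Fin n))).biUnion
          (fun S => (univ : Finset (Fin n → Fin n → Bool)).filter
            (fun g => ¬ ∃ v, ∀ s ∈ S, DomTour.eRel g v s)) := by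
      intro g _
      obtain ⟨S, hScard, hSbad⟩ := hcon g
      refine Finset.mem_biUnion.2 ⟨S, ?_, ?_⟩
      · exact Finset.mem_powersetCard.2 ⟨Finset.subset_univ _, hScard⟩
      · simp only [Finset.mem_filter, Finset.mem_univ, true_and]
        push_neg
        exact hSbad
    have hcard : Fintype.card (Fin n → Fin n → Bool)
        ≤ ∑ S ∈ Finset.powersetCard k (univ : Finset (Fin n)),
            ((univ : Finset (Fin n → Fin n → Bool)).filter
              (fun g => ¬ ∃ v, ∀ s ∈ S, DomTour.eRel g v s)).card := by
      rw [← Finset.card_univ]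
      exact (Finset.card_le_card hsub).trans (Finset.card_biUnion_le)
    -- multiply by (2^k)^(n-k) and use bad_card
    have hHcard : ∀ S : Finset (Fin n), S.card = k →
        Fintype.card ({v : Fin n // v ∉ S} → {s : Fin n // s ∈ S} → Bool)
          = (2 ^ k) ^ (n - k) := by
      intro S hS
      rw [Fintype.card_fun, Fintype.card_fun, Fintype.card_bool,
        Fintype.card_subtype_compl, Fintype.card_coe, Fintype.card_fin, hS]
    have hstep : Fintype.card (Fin n → Fin n → Bool) * (2 ^ k) ^ (n - k)
        ≤ n.choose k * ((2 ^ k - 1) ^ (n - k) * Fintype.card (Fin n → Fin n → Bool)) := by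
      calc Fintype.card (Fin n → Fin n → Bool) * (2 ^ k) ^ (n - k)
          ≤ (∑ S ∈ Finset.powersetCard k (univ : Finset (Fin n)),
              ((univ : Finset (Fin n → Fin n → Bool)).filter
                (fun g => ¬ ∃ v, ∀ s ∈ S, DomTour.eRel g v s)).card) * (2 ^ k) ^ (n - k) :=
            Nat.mul_le_mul_right _ hcard
        _ = ∑ S ∈ Finset.powersetCard k (univ : Finset (Fin n)),
              ((univ : Finset (Fin n → Fin n → Bool)).filter
                (fun g => ¬ ∃ v, ∀ s ∈ S, DomTour.eRel g v s)).card * (2 ^ k) ^ (n - k) := by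
            rw [Finset.sum_mul]
        _ ≤ ∑ S ∈ Finset.powersetCard k (univ : Finset (Fin n)),
              (2 ^ k - 1) ^ (n - k) * Fintype.card (Fin n → Fin n → Bool) := by
            apply Finset.sum_le_sum
            intro S hS
            have hScard : S.card = k := (Finset.mem_powersetCard.1 hS).2
            have := DomTour.bad_card S
            rw [hHcard S hScard, hScard] at this
            exact this
        _ = n.choose k * ((2 ^ k - 1) ^ (n - k) * Fintype.card (Fin n → Fin n → Bool)) := by
            rw [Finset.sum_const, Finset.card_powersetCard, Finset.card_univ,
              Fintype.card_fin, smul_eq_mul]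
    have hlt : n.choose k * ((2 ^ k - 1) ^ (n - k) * Fintype.card (Fin n → Fin n → Bool))
        < Fintype.card (Fin n → Fin n → Bool) * (2 ^ k) ^ (n - k) := by
      have hkey := dom_key_ineq k
      have hΩpos : 0 < Fintype.card (Fin n → Fin n → Bool) := Fintype.card_pos
      calc n.choose k * ((2 ^ k - 1) ^ (n - k) * Fintype.card (Fin n → Fin n → Bool))
          = (n.choose k * (2 ^ k - 1) ^ (n - k)) * Fintype.card (Fin n → Fin n → Bool) := by
            ring
        _ < (2 ^ k) ^ (n - k) * Fintype.card (Fin n → Fin n → Bool) :=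
            mul_lt_mul_of_pos_right hkey hΩpos
        _ = Fintype.card (Fin n → Fin n → Bool) * (2 ^ k) ^ (n - k) := by ring
    exact absurd (hstep.trans_lt hlt) (lt_irrefl _)
  obtain ⟨g, hg⟩ := hgood
  exact ⟨DomTour.eRel g, DomTour.eRel_irrefl g, fun a b hab => DomTour.eRel_asymm g hab, hg⟩
end

section
/- For every nonnegative integer k, a random tournament on 2^{3k} vertices (where each edge orientation is chosen independently uniformly at random) fails to have the property 'for every k-subset S of vertices there is a vertex dominating all of S' with probability at most binom(2^{3k}, k) · e^{-(2^{3k}-k)/2^k}, and this bound is strictly less than 1. -/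
open Classical

/-- The orientation relation of a tournament on `Fin N` encoded by a function
`g` giving the orientation of each edge `{a,b}` with `a < b`:
there is an edge from `a` to `b`. -/
def TournEdge {N : ℕ} (g : Fin N → Fin N → Bool) (a b : Fin N) : Prop :=
  (a < b ∧ g a b = true) ∨ (b < a ∧ g b a = false)

/-- The tournament encoded by `g` fails the domination property for `k`:
some `k`-set `S` of vertices is dominated by no vertex. -/
def TournBad (k : ℕ) {N : ℕ} (g : Fin N → Fin N → Bool) : Prop :=
  ∃ S : Finset (Fin N), S.card = k ∧ ∀ v, ∃ s ∈ S, ¬ TournEdge g v s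

variable {N : ℕ} (S : Finset (Fin N))

def pS (x : Fin N × Fin N) : Prop := x.1 < x.2 ∧ (x.1 ∈ S ↔ x.2 ∉ S)

def e3 : {x : Fin N × Fin N // pS S x} ≃ ({v : Fin N // v ∉ S} × {s : Fin N // s ∈ S}) where
  toFun x :=
    if h : x.1.1 ∈ S then
      (⟨x.1.2, by have := x.2.2; tauto⟩, ⟨x.1.1, h⟩)
    else
      (⟨x.1.1, h⟩, ⟨x.1.2, by have := x.2.2; tauto⟩)
  invFun vs :=
    if h : vs.1.1 < vs.2.1 then
      ⟨(vs.1.1, vs.2.1), h, by have := vs.1.2; have := vs.2.2; tauto⟩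
    else
      ⟨(vs.2.1, vs.1.1), by
        have h1 := vs.1.2; have h2 := vs.2.2
        have hne : vs.2.1 ≠ vs.1.1 := fun he => h1 (he ▸ h2)
        exact lt_of_le_of_ne (not_lt.mp h) hne, by have := vs.1.2; have := vs.2.2; tauto⟩
  left_inv := by
    rintro ⟨⟨a, b⟩, hab, hS⟩
    by_cases h : a ∈ S <;> simp [h, hab, not_lt_of_gt hab]
  right_inv := by
    rintro ⟨⟨v, hv⟩, ⟨s, hs⟩⟩
    have hne : v ≠ s := fun he => hv (he ▸ hs)
    by_cases h : v < s
    · simp [h, fun hvS => hv hvS]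
    · have h' : s < v := lt_of_le_of_ne (not_lt.mp h) hne.symm
      simp [h, h', hs, hv]

noncomputable def bigE : (Fin N → Fin N → Bool) ≃
    (({v : Fin N // v ∉ S} → {s : Fin N // s ∈ S} → Bool) × ({x : Fin N × Fin N // ¬ pS S x} → Bool)) :=
  (Equiv.curry _ _ _).symm.trans ((Equiv.piEquivPiSubtypeProd (pS S) (fun _ => Bool)).trans
    (Equiv.prodCongr ((Equiv.arrowCongr (e3 S) (Equiv.refl Bool)).trans (Equiv.curry _ _ _)) (Equiv.refl _)))

lemma bigE_eval (g : Fin N → Fin N → Bool) (v : Fin N) (hv : v ∉ S) (s : Fin N) (hs : s ∈ S) :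
    (bigE S g).1 ⟨v, hv⟩ ⟨s, hs⟩ = if v < s then g v s else g s v := by
  show g ((e3 S).symm (⟨v, hv⟩, ⟨s, hs⟩)).1.1 ((e3 S).symm (⟨v, hv⟩, ⟨s, hs⟩)).1.2
    = if v < s then g v s else g s v
  by_cases h : v < s <;> simp [e3, Equiv.coe_fn_symm_mk, h]

def cfun : {v : Fin N // v ∉ S} → {s : Fin N // s ∈ S} → Bool :=
  fun vv ss => decide (vv.1 < ss.1)

lemma edge_iff (g : Fin N → Fin N → Bool) (v : Fin N) (hv : v ∉ S) (s : Fin N) (hs : s ∈ S) :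
    TournEdge g v s ↔ (bigE S g).1 ⟨v, hv⟩ ⟨s, hs⟩ = cfun S ⟨v, hv⟩ ⟨s, hs⟩ := by
  have hne : v ≠ s := fun he => hv (he ▸ hs)
  rw [bigE_eval]
  by_cases h : v < s
  · simp [TournEdge, cfun, h, not_lt_of_gt h]
  · have h' : s < v := lt_of_le_of_ne (not_lt.mp h) hne.symm
    simp [TournEdge, cfun, h, h', not_lt_of_gt h']

lemma bad_iff (g : Fin N → Fin N → Bool) :
    (∀ v, ∃ s ∈ S, ¬ TournEdge g v s) ↔ ∀ vv : {v : Fin N // v ∉ S}, (bigE S g).1 vv ≠ cfun S vv := by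
  constructor
  · rintro h ⟨v, hv⟩ hfe
    obtain ⟨s, hs, hne⟩ := h v
    exact hne ((edge_iff S g v hv s hs).mpr (by rw [hfe]))
  · intro h v
    by_cases hv : v ∈ S
    · exact ⟨v, hv, by simp [TournEdge]⟩
    · obtain ⟨ss, hss⟩ := Function.ne_iff.mp (h ⟨v, hv⟩)
      exact ⟨ss.1, ss.2, fun he => hss ((edge_iff S g v hv ss.1 ss.2).mp he)⟩


noncomputable def eq2 {A B : Type*} (Q : A → Prop) : {y : A × B // Q y.1} ≃ ({a : A // Q a} × B) where
  toFun y := (⟨y.1.1, y.2⟩, y.1.2)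
  invFun ab := ⟨(ab.1.1, ab.2), ab.1.2⟩
  left_inv := by rintro ⟨⟨a, b⟩, h⟩; rfl
  right_inv := by rintro ⟨⟨a, h⟩, b⟩; rfl

lemma card_bad {k : ℕ} (hS : S.card = k) :
    Fintype.card {g : Fin N → Fin N → Bool // ∀ v, ∃ s ∈ S, ¬ TournEdge g v s}
      = (2 ^ k - 1) ^ (N - k) * 2 ^ (N * N - (N - k) * k) := by
  have hcS : Fintype.card {s : Fin N // s ∈ S} = k := by
    simpa [Fintype.card_coe] using hS
  have hcV : Fintype.card {v : Fin N // v ∉ S} = N - k := by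
    rw [Fintype.card_subtype_compl, hcS, Fintype.card_fin]
  have hcP : Fintype.card {x : Fin N × Fin N // pS S x} = (N - k) * k := by
    rw [Fintype.card_congr (e3 S), Fintype.card_prod, hcS, hcV]
  have hcPc : Fintype.card {x : Fin N × Fin N // ¬ pS S x} = N * N - (N - k) * k := by
    rw [Fintype.card_subtype_compl, hcP, Fintype.card_prod, Fintype.card_fin]
  have e := ((bigE S).subtypeEquiv (fun g => bad_iff S g)).trans
    (eq2 (fun a : {v : Fin N // v ∉ S} → {s : Fin N // s ∈ S} → Bool => ∀ vv, a vv ≠ cfun S vv))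
  rw [Fintype.card_congr e, Fintype.card_prod, Fintype.card_fun, hcPc, Fintype.card_bool]
  congr 1
  rw [Fintype.card_congr (Equiv.subtypePiEquivPi (p := fun vv b => b ≠ cfun S vv)),
    Fintype.card_pi]
  have : ∀ vv : {v : Fin N // v ∉ S},
      Fintype.card {b : {s : Fin N // s ∈ S} → Bool // b ≠ cfun S vv} = 2 ^ k - 1 := by
    intro vv
    have h2 := Fintype.card_subtype_compl (fun b : {s : Fin N // s ∈ S} → Bool => b = cfun S vv)
    rw [Fintype.card_subtype_eq, Fintype.card_fun, Fintype.card_bool, hcS] at h2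
    convert h2 using 2
  simp only [this, Finset.prod_const, Finset.card_univ, hcV]

lemma nat_L1 (k : ℕ) : 2 * k ≤ 2 ^ k := by
  induction k with
  | zero => simp
  | succ n ih =>
    rcases Nat.eq_zero_or_pos n with h | h
    · subst h; simp
    · have : 2 ≤ 2 ^ n := by
        calc 2 = 2 * 1 := by ring
        _ ≤ 2 * n := by omega
        _ ≤ 2 ^ n := ih
      calc 2 * (n + 1) = 2 * n + 2 := by ring
      _ ≤ 2 ^ n + 2 ^ n := by omega
      _ = 2 ^ (n + 1) := by ring

lemma nat_L2 (k : ℕ) : 3 * k * k + 1 ≤ 4 ^ k := by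
  induction k with
  | zero => simp
  | succ n ih =>
    have : 4 ^ (n + 1) = 4 * 4 ^ n := by ring
    rw [this]
    rcases Nat.eq_zero_or_pos n with h | h
    · subst h; norm_num
    · have hnn : n ≤ n * n := Nat.le_mul_of_pos_left n h
      nlinarith [ih, hnn]

lemma ratio_eq (C N k : ℕ) (hkN : k ≤ N) :
    ((C * ((2 ^ k - 1) ^ (N - k) * 2 ^ (N * N - (N - k) * k)) : ℕ) : ℝ) / 2 ^ (N * N)
      = (C : ℝ) * (1 - 1 / 2 ^ k) ^ (N - k) := by
  have ha : (N - k) * k ≤ N * N := Nat.mul_le_mul (Nat.sub_le _ _) hkN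
  have h1 : (1:ℕ) ≤ 2 ^ k := Nat.one_le_two_pow
  have hcast : (((2 ^ k - 1 : ℕ)) : ℝ) = 2 ^ k - 1 := by
    rw [Nat.cast_sub h1]; push_cast; ring
  have hsplit : (2:ℝ) ^ (N * N) = 2 ^ (N * N - (N - k) * k) * 2 ^ ((N - k) * k) := by
    rw [← pow_add, Nat.sub_add_cancel ha]
  have hne3 : ((2:ℝ) ^ k) ≠ 0 := by positivity
  have hstep : ((C * ((2 ^ k - 1) ^ (N - k) * 2 ^ (N * N - (N - k) * k)) : ℕ) : ℝ)
      = (C : ℝ) * ((2 ^ k - 1 : ℝ) ^ (N - k) * 2 ^ (N * N - (N - k) * k)) := by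
    push_cast [hcast]; ring
  rw [hstep, hsplit]
  have hq : ((2:ℝ) ^ ((N - k) * k)) = ((2:ℝ) ^ k) ^ (N - k) := by
    rw [← pow_mul, Nat.mul_comm]
  rw [hq]
  have hbase : (1 - 1 / 2 ^ k : ℝ) = (2 ^ k - 1) / 2 ^ k := by field_simp
  rw [hbase, div_pow]
  have hne1 : ((2:ℝ) ^ (N * N - (N - k) * k)) ≠ 0 := by positivity
  have hne2 : (((2:ℝ) ^ k) ^ (N - k)) ≠ 0 := by positivity
  field_simp

theorem part_one (k : ℕ) :
    (((Finset.univ.filter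
        (fun g : Fin (2 ^ (3 * k)) → Fin (2 ^ (3 * k)) → Bool => TournBad k g)).card : ℝ) /
        (Fintype.card (Fin (2 ^ (3 * k)) → Fin (2 ^ (3 * k)) → Bool) : ℝ)
      ≤ ((2 ^ (3 * k)).choose k : ℝ) *
        Real.exp (-(((2 ^ (3 * k) : ℝ) - k) / 2 ^ k))) := by
  set N := 2 ^ (3 * k) with hN
  have hkN : k ≤ N := by
    calc k ≤ 2 ^ k := Nat.le_of_lt (Nat.lt_two_pow_self (n := k))
    _ ≤ 2 ^ (3 * k) := Nat.pow_le_pow_right (by norm_num) (by omega)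
  have ha : (N - k) * k ≤ N * N := Nat.mul_le_mul (Nat.sub_le _ _) hkN
  -- union bound in ℕ
  have hsub : Finset.univ.filter (fun g : Fin N → Fin N → Bool => TournBad k g) ⊆
      (Finset.powersetCard k (Finset.univ : Finset (Fin N))).biUnion
        (fun S => Finset.univ.filter (fun g : Fin N → Fin N → Bool =>
          ∀ v, ∃ s ∈ S, ¬ TournEdge g v s)) := by
    intro g hg
    rw [Finset.mem_filter] at hg
    obtain ⟨S, hcard, hforall⟩ := hg.2
    exact Finset.mem_biUnion.mpr ⟨S, Finset.mem_powersetCard.mpr ⟨Finset.subset_univ S, hcard⟩,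
      Finset.mem_filter.mpr ⟨Finset.mem_univ g, hforall⟩⟩
  have hper : ∀ S ∈ Finset.powersetCard k (Finset.univ : Finset (Fin N)),
      (Finset.univ.filter (fun g : Fin N → Fin N → Bool =>
        ∀ v, ∃ s ∈ S, ¬ TournEdge g v s)).card
      = (2 ^ k - 1) ^ (N - k) * 2 ^ (N * N - (N - k) * k) := by
    intro S hS
    have hcard : S.card = k := (Finset.mem_powersetCard.mp hS).2
    rw [← Fintype.card_subtype]
    exact card_bad S hcard
  have hcount : (Finset.univ.filter (fun g : Fin N → Fin N → Bool => TournBad k g)).card ≤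
      N.choose k * ((2 ^ k - 1) ^ (N - k) * 2 ^ (N * N - (N - k) * k)) := by
    calc (Finset.univ.filter (fun g : Fin N → Fin N → Bool => TournBad k g)).card
        ≤ ((Finset.powersetCard k (Finset.univ : Finset (Fin N))).biUnion
            (fun S => Finset.univ.filter (fun g : Fin N → Fin N → Bool =>
              ∀ v, ∃ s ∈ S, ¬ TournEdge g v s))).card := Finset.card_le_card hsub
      _ ≤ ∑ S ∈ Finset.powersetCard k (Finset.univ : Finset (Fin N)),
            (Finset.univ.filter (fun g : Fin N → Fin N → Bool =>
              ∀ v, ∃ s ∈ S, ¬ TournEdge g v s)).card := Finset.card_biUnion_le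
      _ = ∑ S ∈ Finset.powersetCard k (Finset.univ : Finset (Fin N)),
            ((2 ^ k - 1) ^ (N - k) * 2 ^ (N * N - (N - k) * k)) := Finset.sum_congr rfl hper
      _ = N.choose k * ((2 ^ k - 1) ^ (N - k) * 2 ^ (N * N - (N - k) * k)) := by
          rw [Finset.sum_const, Finset.card_powersetCard, Finset.card_univ, Fintype.card_fin,
            smul_eq_mul]
  have hOmega : (Fintype.card (Fin N → Fin N → Bool) : ℝ) = 2 ^ (N * N) := by
    rw [Fintype.card_fun, Fintype.card_fun, Fintype.card_bool, Fintype.card_fin, ← pow_mul]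
    push_cast
    ring
  have h2pos : (0:ℝ) < 2 ^ (N * N) := by positivity
  rw [hOmega]
  have step1 : ((Finset.univ.filter (fun g : Fin N → Fin N → Bool => TournBad k g)).card : ℝ)
      / 2 ^ (N * N)
      ≤ (((N.choose k : ℕ) * ((2 ^ k - 1) ^ (N - k) * 2 ^ (N * N - (N - k) * k)) : ℕ) : ℝ)
        / 2 ^ (N * N) := by
    gcongr
  refine step1.trans ?_
  -- rewrite the middle quantity
  have hksub : ((N - k : ℕ) : ℝ) = (N : ℝ) - k := Nat.cast_sub hkN
  have h2k : (1:ℝ) ≤ 2 ^ k := one_le_pow₀ (by norm_num)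
  rw [ratio_eq (N.choose k) N k hkN]
  have hbase : (0:ℝ) ≤ 1 - 1 / 2 ^ k := by
    have : (1:ℝ) / 2 ^ k ≤ 1 := by
      rw [div_le_one (by positivity)]; exact h2k
    linarith
  have hexp1 : (1 - 1 / 2 ^ k : ℝ) ≤ Real.exp (-(1 / 2 ^ k)) := by
    have := Real.add_one_le_exp (-(1 / 2 ^ k : ℝ))
    linarith
  have hexp2 : ((1 - 1 / 2 ^ k : ℝ)) ^ (N - k) ≤ Real.exp (-(1 / 2 ^ k)) ^ (N - k) :=
    pow_le_pow_left₀ hbase hexp1 _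
  have hexp3 : Real.exp (-(1 / 2 ^ k : ℝ)) ^ (N - k)
      = Real.exp (-(((N : ℝ) - k) / 2 ^ k)) := by
    rw [← Real.exp_nat_mul, hksub]
    congr 1
    ring
  have hNcast : ((N : ℕ) : ℝ) = (2 : ℝ) ^ (3 * k) := by rw [hN]; push_cast; ring
  rw [show ((2 : ℝ) ^ (3 * k)) = ((N : ℕ) : ℝ) from hNcast.symm]
  apply mul_le_mul_of_nonneg_left _ (by positivity)
  rw [← hexp3]; exact hexp2

theorem part_two (k : ℕ) :
    ((2 ^ (3 * k)).choose k : ℝ) * Real.exp (-(((2 ^ (3 * k) : ℝ) - k) / 2 ^ k)) < 1 := by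
  set x : ℝ := ((2 ^ (3 * k) : ℝ) - k) / 2 ^ k with hx
  have hC : ((2 ^ (3 * k)).choose k : ℝ) ≤ (2 : ℝ) ^ (3 * k * k) := by
    have h := Nat.choose_le_pow (2 ^ (3 * k)) k
    have h2 : (2 ^ (3 * k)) ^ k = 2 ^ (3 * k * k) := by rw [← pow_mul]
    calc ((2 ^ (3 * k)).choose k : ℝ) ≤ (((2 ^ (3 * k)) ^ k : ℕ) : ℝ) := by exact_mod_cast h
    _ = (2 : ℝ) ^ (3 * k * k) := by rw [h2]; push_cast; ring
  have hlog : (2 : ℝ) ^ (3 * k * k) = Real.exp ((3 * k * k : ℕ) * Real.log 2) := by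
    rw [← Real.log_pow, Real.exp_log (by positivity)]
  have l2 : Real.log 2 < 1 := by have := Real.log_two_lt_d9; linarith
  have l2' : (0:ℝ) ≤ Real.log 2 := Real.log_nonneg (by norm_num)
  have h1 : ((3 * k * k : ℕ) : ℝ) * Real.log 2 ≤ 3 * (k:ℝ) * k := by
    have : ((3 * k * k : ℕ) : ℝ) * Real.log 2 ≤ ((3 * k * k : ℕ) : ℝ) * 1 :=
      mul_le_mul_of_nonneg_left (le_of_lt l2) (by positivity)
    push_cast at this ⊢
    linarith
  have h2 : 3 * (k:ℝ) * k + 1 ≤ (4:ℝ) ^ k := by exact_mod_cast nat_L2 k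
  have h3 : (k : ℝ) / 2 ^ k ≤ 1 / 2 := by
    rw [div_le_div_iff₀ (by positivity) (by norm_num)]
    have := nat_L1 k
    have : (2 : ℝ) * k ≤ 2 ^ k := by exact_mod_cast this
    linarith
  have hxeq : x = (4:ℝ) ^ k - (k:ℝ) / 2 ^ k := by
    rw [hx]
    have h8 : (2:ℝ) ^ (3 * k) = 2 ^ k * 4 ^ k := by
      rw [show 3 * k = k + 2 * k from by ring, pow_add, pow_mul]
      norm_num
    rw [h8]
    field_simp
  have hlt : ((3 * k * k : ℕ) : ℝ) * Real.log 2 < x := by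
    rw [hxeq]; push_cast at h1 ⊢; linarith
  have hCe : ((2 ^ (3 * k)).choose k : ℝ) < Real.exp x :=
    lt_of_le_of_lt (hC.trans_eq hlog) (Real.exp_lt_exp.mpr hlt)
  have := (div_lt_one (Real.exp_pos x)).mpr hCe
  rwa [div_eq_mul_inv, ← Real.exp_neg] at this

/-- A uniformly random tournament on `2^(3k)` vertices fails to have the property
"every `k`-set of vertices is dominated by some vertex" with probability at most
`binom(2^(3k), k) · exp (-(2^(3k)-k)/2^k)`, and this bound is strictly less than 1. -/
theorem random_tournament_domination (k : ℕ) :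
    (((Finset.univ.filter
        (fun g : Fin (2 ^ (3 * k)) → Fin (2 ^ (3 * k)) → Bool => TournBad k g)).card : ℝ) /
        (Fintype.card (Fin (2 ^ (3 * k)) → Fin (2 ^ (3 * k)) → Bool) : ℝ)
      ≤ ((2 ^ (3 * k)).choose k : ℝ) *
        Real.exp (-(((2 ^ (3 * k) : ℝ) - k) / 2 ^ k))) ∧
    ((2 ^ (3 * k)).choose k : ℝ) * Real.exp (-(((2 ^ (3 * k) : ℝ) - k) / 2 ^ k)) < 1 := by
  exact ⟨part_one k, part_two k⟩
end

section
/- Let σ have arities (a_1,...,a_t) and τ have arities (a'_1,...,a'_{t'}), all positive integers. Then the tuple (a_1,...,a_t) sorted in descending order is weakly lexicographically at least the tuple (a'_1,...,a'_{t'}) sorted in descending order if and only if Σ_{i=1}^{t} (t+t')^{a_i} ≥ Σ_{i=1}^{t'} (t+t')^{a'_i}. -/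
/-- The descending-sorted version of a list of naturals, padded with `0`:
`sortedDesc L i` is the `i`-th largest entry of `L` (or `0` if `i ≥ L.length`). -/
def sortedDesc (L : List ℕ) : ℕ → ℕ :=
  fun i => (((L : Multiset ℕ).sort (· ≤ ·)).reverse).getD i 0

namespace SDAux

abbrev D (L : List ℕ) : List ℕ := ((L : Multiset ℕ).sort (· ≤ ·)).reverse

lemma perm (L : List ℕ) : (D L).Perm L := by
  have h : ((Multiset.sort (L : Multiset ℕ) (· ≤ ·) : List ℕ) : Multiset ℕ) = (L : Multiset ℕ) :=
    Multiset.sort_eq _ _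
  exact (List.reverse_perm _).trans (Multiset.coe_eq_coe.mp h)

lemma sd_eq (L : List ℕ) (i : ℕ) : sortedDesc L i = (D L).getD i 0 := rfl

lemma anti (L : List ℕ) {i j : ℕ} (hij : i ≤ j) : sortedDesc L j ≤ sortedDesc L i := by
  rw [sd_eq, sd_eq]
  have hs : (D L).Pairwise (fun a b => b ≤ a) := by
    rw [List.pairwise_reverse]
    exact Multiset.pairwise_sort _ (· ≤ ·)
  rcases Nat.lt_or_ge j (D L).length with hj | hj
  · have hi : i < (D L).length := lt_of_le_of_lt hij hj
    rw [List.getD_eq_getElem _ _ hj, List.getD_eq_getElem _ _ hi]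
    rcases eq_or_lt_of_le hij with rfl | h
    · exact le_rfl
    · simpa using (List.pairwise_iff_get.mp hs) ⟨i, hi⟩ ⟨j, hj⟩ h
  · rw [List.getD_eq_default _ _ hj]
    exact Nat.zero_le _

lemma pos (L : List ℕ) (h : ∀ x ∈ L, 0 < x) {i : ℕ} (hi : i < L.length) :
    0 < sortedDesc L i := by
  rw [sd_eq]
  have hi' : i < (D L).length := by rw [(perm L).length_eq]; exact hi
  rw [List.getD_eq_getElem _ _ hi']
  exact h _ ((perm L).mem_iff.mp (List.getElem_mem _))

lemma zero (L : List ℕ) {i : ℕ} (hi : L.length ≤ i) : sortedDesc L i = 0 := by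
  rw [sd_eq]
  apply List.getD_eq_default
  rw [(perm L).length_eq]
  exact hi

lemma list_sum_getD (l : List ℕ) (f : ℕ → ℕ) :
    (l.map f).sum = ∑ j ∈ Finset.range l.length, f (l.getD j 0) := by
  induction l with
  | nil => simp
  | cons a t ih =>
    rw [List.map_cons, List.sum_cons, List.length_cons, Finset.sum_range_succ', ih]
    simp [Nat.add_comm]

lemma sum_eq (L : List ℕ) (f : ℕ → ℕ) :
    (L.map f).sum = ∑ j ∈ Finset.range L.length, f (sortedDesc L j) := by
  have hp := perm L
  rw [← List.Perm.sum_eq (hp.map f), list_sum_getD, hp.length_eq]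
  rfl

lemma eq_sum (L1 L2 : List ℕ) (h1 : ∀ x ∈ L1, 0 < x) (h2 : ∀ x ∈ L2, 0 < x)
    (h : sortedDesc L1 = sortedDesc L2) (f : ℕ → ℕ) :
    (L1.map f).sum = (L2.map f).sum := by
  have hlen : L1.length = L2.length := by
    rcases Nat.lt_trichotomy L1.length L2.length with hl | hl | hl
    · exfalso
      have hp := pos L2 h2 hl
      have hz := zero L1 (le_refl L1.length)
      rw [h] at hz; omega
    · exact hl
    · exfalso
      have hp := pos L1 h1 hl
      have hz := zero L2 (le_refl L2.length)
      rw [← h] at hz; omega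
  rw [sum_eq, sum_eq, hlen]
  exact Finset.sum_congr rfl fun j _ => by rw [h]

open Finset in
lemma sum_lt (L1 L2 : List ℕ)
    (i : ℕ) (hlt : ∀ j < i, sortedDesc L1 j = sortedDesc L2 j)
    (hi : sortedDesc L1 i < sortedDesc L2 i) :
    (L1.map (fun x => (L1.length + L2.length) ^ x)).sum <
    (L2.map (fun x => (L1.length + L2.length) ^ x)).sum := by
  set n := L1.length + L2.length with hn
  have hit' : i < L2.length := by
    by_contra h
    have := zero L2 (le_of_not_gt h)
    omega
  have hit : i ≤ L1.length := by
    by_contra h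
    push_neg at h
    have h0 : sortedDesc L1 L1.length = 0 := zero L1 le_rfl
    have he := hlt L1.length h
    have ha := anti L2 (le_of_lt h)
    omega
  have hn1 : 0 < n := by omega
  have htn : L1.length < n := by omega
  rw [sum_eq L1, sum_eq L2]
  have key1 : ∑ j ∈ range L1.length, n ^ sortedDesc L1 j
      = ∑ j ∈ range i, n ^ sortedDesc L2 j + ∑ j ∈ Ico i L1.length, n ^ sortedDesc L1 j := by
    rw [range_eq_Ico, ← Finset.sum_Ico_consecutive _ (Nat.zero_le i) hit, ← range_eq_Ico]
    congr 1
    exact Finset.sum_congr rfl fun j hj => by rw [hlt j (mem_range.mp hj)]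
  have key2 : ∑ j ∈ range L2.length, n ^ sortedDesc L2 j
      = ∑ j ∈ range i, n ^ sortedDesc L2 j + ∑ j ∈ Ico i L2.length, n ^ sortedDesc L2 j := by
    rw [range_eq_Ico, ← Finset.sum_Ico_consecutive _ (Nat.zero_le i) (le_of_lt hit'), ← range_eq_Ico]
  rw [key1, key2]
  apply Nat.add_lt_add_left
  calc ∑ j ∈ Ico i L1.length, n ^ sortedDesc L1 j
      ≤ ∑ _j ∈ Ico i L1.length, n ^ sortedDesc L1 i :=
        Finset.sum_le_sum fun j hj => Nat.pow_le_pow_right hn1 (anti L1 (mem_Ico.mp hj).1)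
    _ = (L1.length - i) * n ^ sortedDesc L1 i := by rw [Finset.sum_const, Nat.card_Ico, smul_eq_mul]
    _ ≤ L1.length * n ^ sortedDesc L1 i := Nat.mul_le_mul_right _ (Nat.sub_le _ _)
    _ < n * n ^ sortedDesc L1 i := by
        exact Nat.mul_lt_mul_of_lt_of_le htn le_rfl (Nat.pow_pos hn1)
    _ = n ^ (sortedDesc L1 i + 1) := by rw [pow_succ, Nat.mul_comm]
    _ ≤ n ^ sortedDesc L2 i := Nat.pow_le_pow_right hn1 hi
    _ ≤ ∑ j ∈ Ico i L2.length, n ^ sortedDesc L2 j :=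
        Finset.single_le_sum (f := fun j => n ^ sortedDesc L2 j)
          (fun _ _ => Nat.zero_le _) (mem_Ico.mpr ⟨le_refl i, hit'⟩)

end SDAux


/-- For signatures `σ`, `τ` with positive arity lists `L1`, `L2` of lengths `t`, `t'`:
the descending-sorted arity tuple of `σ` is weakly lexicographically at least that of `τ`
iff `Σ_i (t+t')^{a_i} ≥ Σ_i (t+t')^{a'_i}`. -/
theorem lex_iff_sum_pow (L1 L2 : List ℕ) (h1 : ∀ x ∈ L1, 0 < x) (h2 : ∀ x ∈ L2, 0 < x) :
    (sortedDesc L1 = sortedDesc L2 ∨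
      ∃ i, (∀ j < i, sortedDesc L1 j = sortedDesc L2 j) ∧ sortedDesc L2 i < sortedDesc L1 i)
    ↔ (L2.map (fun x => (L1.length + L2.length) ^ x)).sum ≤
        (L1.map (fun x => (L1.length + L2.length) ^ x)).sum := by
  constructor
  · rintro (h | ⟨i, hj, hi⟩)
    · exact (SDAux.eq_sum L1 L2 h1 h2 h _).ge
    · have := SDAux.sum_lt L2 L1 i (fun j hj' => (hj j hj').symm) hi
      rw [Nat.add_comm L2.length L1.length] at this
      exact this.le
  · intro hsum
    by_contra hc
    push_neg at hc
    obtain ⟨hne, hforall⟩ := hc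
    have hex : ∃ i, sortedDesc L1 i ≠ sortedDesc L2 i := by
      by_contra hall
      push_neg at hall
      exact hne (funext hall)
    classical
    have hi := Nat.find_spec hex
    have hmin : ∀ j < Nat.find hex, sortedDesc L1 j = sortedDesc L2 j :=
      fun j hj => not_not.mp (Nat.find_min hex hj)
    have hle := hforall (Nat.find hex) hmin
    have hlt : sortedDesc L1 (Nat.find hex) < sortedDesc L2 (Nat.find hex) :=
      lt_of_le_of_ne hle hi
    exact absurd hsum (not_le.mpr (SDAux.sum_lt L1 L2 (Nat.find hex) hmin hlt))
end

section
/- Fix a positive integer k. For the Erdős–Rényi random graph G(n,1/2), the probability that G fails to satisfy the k-extension axioms is at most n^k · 2^{2k} · (1 - 2^{-k})^{n-k}; in particular this probability is negligible in n. -/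
open Classical

/-- Adjacency in the graph on `Fin n` encoded by `g`, which gives for each pair `a < b`
an independent fair coin deciding whether `{a,b}` is an edge. -/
def GAdj {n : ℕ} (g : Fin n → Fin n → Bool) (a b : Fin n) : Prop :=
  (a < b ∧ g a b = true) ∨ (b < a ∧ g b a = true)

/-- The graph encoded by `g` satisfies the `k`-extension axioms `EA_k`: for every `k`-set
`S` of vertices and every `T ⊆ S` there is `v ∉ S` adjacent to every vertex of `T` and
non-adjacent to every vertex of `S \ T`. -/
def GraphEA (k : ℕ) {n : ℕ} (g : Fin n → Fin n → Bool) : Prop :=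
  ∀ S : Finset (Fin n), S.card = k → ∀ T ⊆ S, ∃ v, v ∉ S ∧
    (∀ u ∈ T, GAdj g v u) ∧ (∀ u ∈ S \ T, ¬ GAdj g v u)

/-- The probability that `G(n,1/2)` fails `EA_k`. -/
noncomputable def eaFailProb (k n : ℕ) : ℝ :=
  ((Finset.univ.filter (fun g : Fin n → Fin n → Bool => ¬ GraphEA k g)).card : ℝ) /
    (Fintype.card (Fin n → Fin n → Bool) : ℝ)

/-- The "bad" event for a pair `(S, T)`: no vertex outside `S` realizes the required
adjacency pattern. -/
def badPair {n : ℕ} (S T : Finset (Fin n)) (g : Fin n → Fin n → Bool) : Prop :=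
  ∀ v, v ∉ S → ∃ u ∈ S, g (min v u) (max v u) ≠ decide (u ∈ T)

lemma gadj_iff {n : ℕ} {g : Fin n → Fin n → Bool} {v u : Fin n} (h : v ≠ u) :
    GAdj g v u ↔ g (min v u) (max v u) = true := by
  rcases lt_or_gt_of_ne h with hlt | hgt
  · simp [GAdj, min_eq_left hlt.le, max_eq_right hlt.le, hlt, hlt.asymm]
  · simp [GAdj, min_eq_right hgt.le, max_eq_left hgt.le, hgt, hgt.asymm]

lemma exists_bad {n k : ℕ} {g : Fin n → Fin n → Bool} (hg : ¬ GraphEA k g) :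
    ∃ S : Finset (Fin n), S.card = k ∧ ∃ T, T ⊆ S ∧ badPair S T g := by
  rw [GraphEA] at hg
  push_neg at hg
  obtain ⟨S, hS, T, hT, hall⟩ := hg
  refine ⟨S, hS, T, hT, fun v hv => ?_⟩
  by_cases hadj : ∀ u ∈ T, GAdj g v u
  · obtain ⟨u, hu, hadju⟩ := hall v hv hadj
    obtain ⟨huS, huT⟩ := Finset.mem_sdiff.mp hu
    have hne : v ≠ u := fun h => hv (h ▸ huS)
    refine ⟨u, huS, ?_⟩
    rw [(gadj_iff hne).mp hadju]
    simp [huT]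
  · push_neg at hadj
    obtain ⟨u, huT, hnadj⟩ := hadj
    have huS := hT huT
    have hne : v ≠ u := fun h => hv (h ▸ huS)
    refine ⟨u, huS, ?_⟩
    rw [gadj_iff hne] at hnadj
    simp only [huT, decide_eq_true_eq]
    simpa using hnadj

lemma card_badPair {n k : ℕ} (S T : Finset (Fin n)) (hS : S.card = k) :
    (Finset.univ.filter (badPair S T)).card * (2 ^ k) ^ (n - k) =
      (2 ^ k - 1) ^ (n - k) * Fintype.card (Fin n → Fin n → Bool) := by
  classical
  set A := ({x // x ∈ Sᶜ} × {x // x ∈ S}) with hA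
  set φ : A → Fin n × Fin n := fun p => (min p.1.1 p.2.1, max p.1.1 p.2.1) with hφdef
  have hφ : Function.Injective φ := by
    rintro ⟨⟨v, hv⟩, ⟨u, hu⟩⟩ ⟨⟨v', hv'⟩, ⟨u', hu'⟩⟩ h
    simp only [hφdef, Prod.mk.injEq] at h
    obtain ⟨h1, h2⟩ := h
    rw [Finset.mem_compl] at hv hv'
    rcases le_total v u with hvu | hvu <;> rcases le_total v' u' with hvu' | hvu'
    · rw [min_eq_left hvu, min_eq_left hvu'] at h1
      rw [max_eq_right hvu, max_eq_right hvu'] at h2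
      simp [h1, h2]
    · rw [min_eq_left hvu, min_eq_right hvu'] at h1
      exact absurd (h1 ▸ hu') hv
    · rw [min_eq_right hvu, min_eq_left hvu'] at h1
      exact absurd (h1.symm ▸ hu) hv'
    · rw [min_eq_right hvu, min_eq_right hvu'] at h1
      rw [max_eq_left hvu, max_eq_left hvu'] at h2
      simp [h1, h2]
  set C : Set (Fin n × Fin n) := Set.range φ with hC
  set E : (Fin n → Fin n → Bool) ≃ (({x // x ∈ Sᶜ} → {x // x ∈ S} → Bool) × (↥Cᶜ → Bool)) :=
    ((Equiv.curry (Fin n) (Fin n) Bool).symm.trans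
      ((Equiv.arrowCongr (Equiv.Set.sumCompl C).symm (Equiv.refl Bool)).trans
        ((Equiv.sumArrowEquivProdArrow _ _ _).trans
          (Equiv.prodCongr
            (((Equiv.arrowCongr (Equiv.ofInjective φ hφ) (Equiv.refl Bool)).symm).trans
              (Equiv.curry _ _ _))
            (Equiv.refl _))))) with hE
  have hEfst : ∀ (g : Fin n → Fin n → Bool) (v : {x // x ∈ Sᶜ}) (u : {x // x ∈ S}),
      (E g).1 v u = g (min v.1 u.1) (max v.1 u.1) := by
    intro g v u
    rfl
  set dT : {x // x ∈ S} → Bool := fun u => decide (u.1 ∈ T) with hdT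
  have key : ∀ g : Fin n → Fin n → Bool,
      badPair S T g ↔ ∀ v : {x // x ∈ Sᶜ}, (E g).1 v ≠ dT := by
    intro g
    constructor
    · intro hb v
      obtain ⟨u, hu, hne⟩ := hb v.1 (Finset.mem_compl.mp v.2)
      rw [Function.ne_iff]
      exact ⟨⟨u, hu⟩, by rw [hEfst]; exact hne⟩
    · intro h v hv
      obtain ⟨u, hu⟩ := Function.ne_iff.mp (h ⟨v, Finset.mem_compl.mpr hv⟩)
      rw [hEfst] at hu
      exact ⟨u.1, u.2, hu⟩
  have e1 : {g : Fin n → Fin n → Bool // badPair S T g} ≃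
      {p : ({x // x ∈ Sᶜ} → {x // x ∈ S} → Bool) × (↥Cᶜ → Bool) //
        ∀ v, p.1 v ≠ dT} :=
    (Equiv.subtypeEquiv E (fun g => by rw [key g])).trans (Equiv.refl _)
  have e2 : {p : ({x // x ∈ Sᶜ} → {x // x ∈ S} → Bool) × (↥Cᶜ → Bool) //
        ∀ v, p.1 v ≠ dT} ≃
      {x : {x // x ∈ Sᶜ} → {x // x ∈ S} → Bool // ∀ v, x v ≠ dT} × (↥Cᶜ → Bool) :=
    { toFun := fun p => (⟨p.1.1, p.2⟩, p.1.2)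
      invFun := fun q => ⟨(q.1.1, q.2), q.1.2⟩
      left_inv := fun p => rfl
      right_inv := fun q => rfl }
  have e3 : {x : {x // x ∈ Sᶜ} → {x // x ∈ S} → Bool // ∀ v, x v ≠ dT} ≃
      ({x // x ∈ Sᶜ} → {f : {x // x ∈ S} → Bool // f ≠ dT}) :=
    Equiv.subtypePiEquivPi (p := fun _ f => f ≠ dT)
  have hcard1 : Fintype.card {f : {x // x ∈ S} → Bool // f ≠ dT} = 2 ^ k - 1 := by
    have : Fintype.card {f : {x // x ∈ S} → Bool // ¬ (f = dT)} =
        Fintype.card ({x // x ∈ S} → Bool) - Fintype.card {f : {x // x ∈ S} → Bool // f = dT} :=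
      Fintype.card_subtype_compl _
    rw [Fintype.card_subtype_eq, Fintype.card_fun, Fintype.card_coe, hS] at this
    simpa using this
  have hSc : Fintype.card {x // x ∈ Sᶜ} = n - k := by
    rw [Fintype.card_coe, Finset.card_compl, hS, Fintype.card_fin]
  have hX : Fintype.card ({x // x ∈ Sᶜ} → {x // x ∈ S} → Bool) = (2 ^ k) ^ (n - k) := by
    rw [Fintype.card_fun, Fintype.card_fun, Fintype.card_coe, Fintype.card_coe,
      Fintype.card_bool, hS, Finset.card_compl, hS, Fintype.card_fin]
  have hbadcard : (Finset.univ.filter (badPair S T)).card =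
      (2 ^ k - 1) ^ (n - k) * Fintype.card (↥Cᶜ → Bool) := by
    rw [← Fintype.card_subtype]
    rw [Fintype.card_congr (e1.trans (e2.trans (Equiv.prodCongr e3 (Equiv.refl _))))]
    rw [Fintype.card_prod, Fintype.card_pi]
    congr 1
    rw [Finset.prod_const, hcard1, ← hSc, Finset.card_univ]
  have htot : Fintype.card (Fin n → Fin n → Bool) =
      (2 ^ k) ^ (n - k) * Fintype.card (↥Cᶜ → Bool) := by
    rw [Fintype.card_congr E, Fintype.card_prod, hX]
  rw [hbadcard, htot]
  ring

lemma eaFailProb_le (k n : ℕ) :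
    eaFailProb k n ≤ (n : ℝ) ^ k * 2 ^ (2 * k) * (1 - (2 : ℝ)⁻¹ ^ k) ^ (n - k) := by
  classical
  set q : ℝ := (1 - (2 : ℝ)⁻¹ ^ k) ^ (n - k) with hqdef
  have hq0 : (0 : ℝ) ≤ 1 - (2 : ℝ)⁻¹ ^ k := by
    have : (2 : ℝ)⁻¹ ^ k ≤ 1 := pow_le_one₀ (by norm_num) (by norm_num)
    linarith
  have hqnn : 0 ≤ q := pow_nonneg hq0 _
  have htotpos : (0 : ℝ) < (Fintype.card (Fin n → Fin n → Bool) : ℝ) := by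
    exact_mod_cast Fintype.card_pos
  -- each bad pair has probability exactly q
  have hperpair : ∀ S : Finset (Fin n), S.card = k → ∀ T : Finset (Fin n),
      ((Finset.univ.filter (badPair S T)).card : ℝ) ≤
        q * (Fintype.card (Fin n → Fin n → Bool) : ℝ) := by
    intro S hS T
    have h := card_badPair S T hS
    have hcast := congrArg (Nat.cast : ℕ → ℝ) h
    have h1le : (1 : ℕ) ≤ 2 ^ k := Nat.one_le_two_pow
    push_cast [Nat.cast_sub h1le] at hcast
    have hfact : ((2 : ℝ) ^ k - 1) ^ (n - k) =
        q * ((2 : ℝ) ^ k) ^ (n - k) := by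
      rw [hqdef, ← mul_pow]
      congr 1
      have : (2 : ℝ) ^ k ≠ 0 := by positivity
      field_simp
      rw [mul_sub, mul_one, ← mul_pow]; norm_num
    have hpowpos : (0 : ℝ) < ((2 : ℝ) ^ k) ^ (n - k) := by positivity
    have := hcast
    rw [hfact] at this
    -- this : card * (2^k)^(n-k) = q * (2^k)^(n-k) * total
    have hcardeq : ((Finset.univ.filter (badPair S T)).card : ℝ) =
        q * (Fintype.card (Fin n → Fin n → Bool) : ℝ) := by
      have h2 : ((Finset.univ.filter (badPair S T)).card : ℝ) * ((2 : ℝ) ^ k) ^ (n - k) =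
          (q * (Fintype.card (Fin n → Fin n → Bool) : ℝ)) * ((2 : ℝ) ^ k) ^ (n - k) := by
        rw [this]; ring
      exact mul_right_cancel₀ (ne_of_gt hpowpos) h2
    exact le_of_eq hcardeq
  -- union bound
  set pwc := Finset.univ.powersetCard k (α := Fin n) with hpwc
  have hsub : Finset.univ.filter (fun g : Fin n → Fin n → Bool => ¬ GraphEA k g) ⊆
      pwc.biUnion (fun S => S.powerset.biUnion
        (fun T => Finset.univ.filter (badPair S T))) := by
    intro g hg
    rw [Finset.mem_filter] at hg
    obtain ⟨S, hS, T, hT, hbad⟩ := exists_bad hg.2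
    rw [Finset.mem_biUnion]
    refine ⟨S, ?_, ?_⟩
    · rw [hpwc, Finset.mem_powersetCard_univ]; exact hS
    · rw [Finset.mem_biUnion]
      exact ⟨T, Finset.mem_powerset.mpr hT, Finset.mem_filter.mpr ⟨Finset.mem_univ _, hbad⟩⟩
  have hN : (Finset.univ.filter (fun g : Fin n → Fin n → Bool => ¬ GraphEA k g)).card ≤
      ∑ S ∈ pwc, ∑ T ∈ S.powerset, (Finset.univ.filter (badPair S T)).card :=
    (Finset.card_le_card hsub).trans
      (Finset.card_biUnion_le.trans (Finset.sum_le_sum fun S _ => Finset.card_biUnion_le))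
  have hR : ((Finset.univ.filter (fun g : Fin n → Fin n → Bool => ¬ GraphEA k g)).card : ℝ) ≤
      (n.choose k : ℝ) * 2 ^ k * (q * (Fintype.card (Fin n → Fin n → Bool) : ℝ)) := by
    calc ((Finset.univ.filter (fun g : Fin n → Fin n → Bool => ¬ GraphEA k g)).card : ℝ)
        ≤ ∑ S ∈ pwc, ∑ T ∈ S.powerset, ((Finset.univ.filter (badPair S T)).card : ℝ) := by
          exact_mod_cast hN
      _ ≤ ∑ S ∈ pwc, ∑ T ∈ S.powerset,
            (q * (Fintype.card (Fin n → Fin n → Bool) : ℝ)) := by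
          refine Finset.sum_le_sum fun S hSmem => Finset.sum_le_sum fun T _ => ?_
          exact hperpair S (Finset.mem_powersetCard_univ.mp hSmem) T
      _ = ∑ S ∈ pwc, (2 : ℝ) ^ S.card * (q * (Fintype.card (Fin n → Fin n → Bool) : ℝ)) := by
          refine Finset.sum_congr rfl fun S _ => ?_
          rw [Finset.sum_const, Finset.card_powerset, nsmul_eq_mul]
          push_cast
          ring
      _ = (n.choose k : ℝ) * 2 ^ k * (q * (Fintype.card (Fin n → Fin n → Bool) : ℝ)) := by
          rw [Finset.sum_congr rfl fun S hSmem => by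
            rw [Finset.mem_powersetCard_univ.mp hSmem]]
          rw [Finset.sum_const, hpwc, Finset.card_powersetCard, Finset.card_univ,
            Fintype.card_fin, nsmul_eq_mul]
          ring
  rw [eaFailProb, div_le_iff₀ htotpos]
  calc ((Finset.univ.filter (fun g : Fin n → Fin n → Bool => ¬ GraphEA k g)).card : ℝ)
      ≤ (n.choose k : ℝ) * 2 ^ k * (q * (Fintype.card (Fin n → Fin n → Bool) : ℝ)) := hR
    _ ≤ (n : ℝ) ^ k * 2 ^ (2 * k) * (q * (Fintype.card (Fin n → Fin n → Bool) : ℝ)) := by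
        have h1 : (n.choose k : ℝ) ≤ (n : ℝ) ^ k := by
          exact_mod_cast Nat.choose_le_pow n k
        have h2 : (2 : ℝ) ^ k ≤ (2 : ℝ) ^ (2 * k) :=
          pow_le_pow_right₀ (by norm_num) (by omega)
        have hqt : (0 : ℝ) ≤ q * (Fintype.card (Fin n → Fin n → Bool) : ℝ) :=
          mul_nonneg hqnn htotpos.le
        exact mul_le_mul_of_nonneg_right
          (mul_le_mul h1 h2 (by positivity) (by positivity)) hqt
    _ = (n : ℝ) ^ k * 2 ^ (2 * k) * q * (Fintype.card (Fin n → Fin n → Bool) : ℝ) := by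
        ring

/-- For fixed `k ≥ 1`, the probability that `G(n,1/2)` fails the `k`-extension axioms is
at most `n^k · 2^{2k} · (1 - 2^{-k})^{n-k}`; in particular it is negligible in `n`. -/
theorem random_graph_extension_axioms (k : ℕ) (hk : 0 < k) :
    (∀ n : ℕ,
      eaFailProb k n ≤ (n : ℝ) ^ k * 2 ^ (2 * k) * (1 - (2 : ℝ)⁻¹ ^ k) ^ (n - k)) ∧
    (∀ c : ℕ, ∃ N : ℕ, ∀ n ≥ N, eaFailProb k n ≤ 1 / (n : ℝ) ^ c) := by
  constructor
  · exact fun n => eaFailProb_le k n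
  · intro c
    set r : ℝ := 1 - (2 : ℝ)⁻¹ ^ k with hrdef
    have hr0 : 0 < r := by
      have : (2 : ℝ)⁻¹ ^ k < 1 :=
        pow_lt_one₀ (by norm_num) (by norm_num) hk.ne'
      rw [hrdef]; linarith
    have hr1 : r < 1 := by
      have : (0 : ℝ) < (2 : ℝ)⁻¹ ^ k := by positivity
      rw [hrdef]; linarith
    have hrnorm : ‖r‖ < 1 := by rw [Real.norm_eq_abs, abs_of_pos hr0]; exact hr1
    have htend : Filter.Tendsto (fun n : ℕ => (n : ℝ) ^ (k + c) * r ^ n)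
        Filter.atTop (nhds 0) :=
      (summable_norm_pow_mul_geometric_of_norm_lt_one (k + c) hrnorm).of_norm.tendsto_atTop_zero
    set ε : ℝ := r ^ k / 2 ^ (2 * k) with hεdef
    have hε : 0 < ε := by positivity
    obtain ⟨N, hNt⟩ := (Filter.tendsto_atTop'.mp htend) (Set.Ioo (-ε) ε)
      (Ioo_mem_nhds (by linarith) hε)
    refine ⟨max N (k + 1), fun n hn => ?_⟩
    have hnN : n ≥ N := le_trans (le_max_left _ _) hn
    have hnk : k ≤ n := by
      have := le_trans (le_max_right _ _) hn; omega
    have hn1 : 1 ≤ n := by omega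
    have hsmall : (n : ℝ) ^ (k + c) * r ^ n < ε := (hNt n hnN).2
    have hnpos : (0 : ℝ) < (n : ℝ) ^ c := by
      have : (0 : ℝ) < (n : ℝ) := by exact_mod_cast hn1
      positivity
    refine le_trans (eaFailProb_le k n) ?_
    rw [le_div_iff₀ hnpos]
    rw [← hrdef]
    have hrpow : r ^ (n - k) = r ^ n * (r ^ k)⁻¹ := pow_sub₀ r (ne_of_gt hr0) hnk
    rw [hrpow]
    have hkey : (n : ℝ) ^ k * 2 ^ (2 * k) * (r ^ n * (r ^ k)⁻¹) * (n : ℝ) ^ c =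
        ((n : ℝ) ^ (k + c) * r ^ n) * (2 ^ (2 * k) * (r ^ k)⁻¹) := by
      rw [pow_add]; ring
    rw [hkey]
    have hc2 : (0 : ℝ) < 2 ^ (2 * k) * (r ^ k)⁻¹ := by positivity
    have : ((n : ℝ) ^ (k + c) * r ^ n) * (2 ^ (2 * k) * (r ^ k)⁻¹) ≤
        ε * (2 ^ (2 * k) * (r ^ k)⁻¹) := by
      exact mul_le_mul_of_nonneg_right hsmall.le hc2.le
    refine le_trans this ?_
    rw [hεdef]
    have h2 : (0 : ℝ) < (2 : ℝ) ^ (2 * k) := by positivity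
    have hrk : (0 : ℝ) < r ^ k := by positivity
    field_simp
    norm_num
end

section
/- Let σ ⪰_S τ denote: for all positive integers k, Σ_{i=1}^{t} T(a_i,k) ≥ Σ_{i=1}^{t'} T(a'_i,k), where T(a,k) counts surjections [a] → [k], and let σ ⪰_L τ denote that the descending-sorted arity tuple of σ is lexicographically at least that of τ. Then σ ⪰_S τ implies σ ⪰_L τ, but the converse fails: there exist signatures with σ ⪰_L τ and not σ ⪰_S τ (e.g., σ with one binary relation and τ with two unary relations). -/
/-- `surjCount a k` is the number of surjections from `[a]` onto `[k]` (denoted `T(a,k)`). -/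
noncomputable def surjCount (a k : ℕ) : ℕ :=
  Fintype.card {f : Fin a → Fin k // Function.Surjective f}

/-- The entropy order `σ ⪰_S τ` on arity lists: for all `k ≥ 1`,
`Σ_i T(a_i,k) ≥ Σ_i T(a'_i,k)`. -/
def SOrd (A A' : List ℕ) : Prop :=
  ∀ k : ℕ, 1 ≤ k →
    (A'.map (fun a => surjCount a k)).sum ≤ (A.map (fun a => surjCount a k)).sum

/-- The entropy order `σ ⪰_L τ`: the descending-sorted arity tuple of `σ` is weakly
lexicographically at least that of `τ`. -/
def LOrd (A A' : List ℕ) : Prop :=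
  sortedDesc A = sortedDesc A' ∨
    ∃ i, (∀ j < i, sortedDesc A j = sortedDesc A' j) ∧ sortedDesc A' i < sortedDesc A i

lemma surjCount_eq_zero {a k : ℕ} (h : a < k) : surjCount a k = 0 := by
  rw [surjCount, Fintype.card_eq_zero_iff]
  exact ⟨fun ⟨f, hf⟩ => absurd (Fintype.card_le_of_surjective f hf) (by simpa using h.not_ge)⟩

lemma surjCount_pos (b : ℕ) : 0 < surjCount b b := by
  rw [surjCount]
  exact Fintype.card_pos_iff.mpr ⟨⟨_root_.id, Function.surjective_id⟩⟩

lemma surjCount_one {a : ℕ} (h : 1 ≤ a) : surjCount a 1 = 1 := by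
  rw [surjCount, Fintype.card_eq_one_iff]
  refine ⟨⟨fun _ => 0, fun y => ⟨⟨0, h⟩, Subsingleton.elim _ _⟩⟩, ?_⟩
  rintro ⟨g, hg⟩
  exact Subtype.ext (funext fun x => Subsingleton.elim _ _)

lemma getD_anti {S : List ℕ} (hsort : S.Pairwise (· ≥ ·)) {i j : ℕ} (h : i ≤ j) :
    S.getD j 0 ≤ S.getD i 0 := by
  by_cases hj : j < S.length
  · have hi : i < S.length := lt_of_le_of_lt h hj
    rw [List.getD_eq_getElem _ _ hj, List.getD_eq_getElem _ _ hi]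
    rcases eq_or_lt_of_le h with rfl | hlt
    · exact le_refl _
    · exact List.pairwise_iff_get.mp hsort ⟨i, hi⟩ ⟨j, hj⟩ hlt
  · rw [List.getD_eq_default _ _ (le_of_not_gt hj)]
    exact Nat.zero_le _

lemma sortedDesc_sorted (L : List ℕ) :
    ((((L : Multiset ℕ).sort (· ≤ ·)).reverse) : List ℕ).Pairwise (· ≥ ·) :=
  List.pairwise_reverse.mpr (by simpa using Multiset.pairwise_sort (L : Multiset ℕ) (· ≤ ·))

lemma sortedDesc_anti (L : List ℕ) {i j : ℕ} (h : i ≤ j) :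
    sortedDesc L j ≤ sortedDesc L i :=
  getD_anti (sortedDesc_sorted L) h

lemma list_sum_map_eq (l : List ℕ) (f : ℕ → ℕ) :
    (l.map f).sum = ∑ i ∈ Finset.range l.length, f (l.getD i 0) := by
  induction l with
  | nil => simp
  | cons a t ih =>
      rw [List.map_cons, List.sum_cons, List.length_cons, Finset.sum_range_succ']
      simp [ih, Nat.add_comm]

lemma perm_sortedDesc (A : List ℕ) :
    A.Perm (((A : Multiset ℕ).sort (· ≤ ·)).reverse) := by
  have h1 : ((((A : Multiset ℕ).sort (· ≤ ·)) : List ℕ) : Multiset ℕ) = (A : Multiset ℕ) :=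
    Multiset.sort_eq _ _
  have h2 : A.Perm ((A : Multiset ℕ).sort (· ≤ ·)) := Quotient.exact h1.symm
  exact h2.trans (List.reverse_perm _).symm

lemma sum_map_eq_sortedDesc (A : List ℕ) (f : ℕ → ℕ) (hf : f 0 = 0) {N : ℕ}
    (hN : A.length ≤ N) :
    (A.map f).sum = ∑ i ∈ Finset.range N, f (sortedDesc A i) := by
  have hperm := perm_sortedDesc A
  have hlen : (((A : Multiset ℕ).sort (· ≤ ·)).reverse).length = A.length :=
    hperm.length_eq.symm
  rw [(hperm.map f).sum_eq, list_sum_map_eq]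
  refine Finset.sum_subset (Finset.range_subset_range.mpr (hlen ▸ hN)) ?_
  intro x _ hx
  rw [Finset.mem_range, not_lt, hlen] at hx
  show f (((((A : Multiset ℕ)).sort (· ≤ ·)).reverse).getD x 0) = 0
  rw [List.getD_eq_default _ _ (hlen ▸ hx : _ ≤ x), hf]

lemma sort_coe (l : List ℕ) (h : l.Pairwise (· ≤ ·)) :
    (l : Multiset ℕ).sort (· ≤ ·) = l :=
  List.Perm.eq_of_pairwise' (Multiset.pairwise_sort _ _) h
    (Quotient.exact (Multiset.sort_eq _ _))

/-- `⪰_S` refines `⪰_L`: `σ ⪰_S τ` implies `σ ⪰_L τ`, but the converse fails, as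
witnessed by `σ` with one binary relation and `τ` with two unary relations. -/
theorem sOrd_implies_lOrd_not_conversely :
    (∀ A A' : List ℕ, (∀ a ∈ A, 0 < a) → (∀ a ∈ A', 0 < a) → SOrd A A' → LOrd A A') ∧
    (LOrd [2] [1, 1] ∧ ¬ SOrd [2] [1, 1]) := by
  constructor
  · intro A A' _ _ hS
    by_cases heq : sortedDesc A = sortedDesc A'
    · exact Or.inl heq
    have hex : ∃ m, sortedDesc A m ≠ sortedDesc A' m := Function.ne_iff.mp heq
    set i := Nat.find hex with hi
    have hne : sortedDesc A i ≠ sortedDesc A' i := Nat.find_spec hex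
    have hpre : ∀ j < i, sortedDesc A j = sortedDesc A' j := fun j hj =>
      not_not.mp (Nat.find_min hex hj)
    rcases lt_or_gt_of_ne hne with hlt | hgt
    · -- α i < β i : contradiction with SOrd at k = β i
      exfalso
      set b := sortedDesc A' i with hb
      have hb1 : 1 ≤ b := Nat.lt_of_le_of_lt (Nat.zero_le _) hlt
      set f : ℕ → ℕ := fun a => surjCount a b with hf
      have hf0 : f 0 = 0 := surjCount_eq_zero hb1
      set N := max (max A.length A'.length) (i + 1) with hN
      have hNA : A.length ≤ N := le_trans (le_max_left _ _) (le_max_left _ _)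
      have hNA' : A'.length ≤ N := le_trans (le_max_right _ _) (le_max_left _ _)
      have hNi : i + 1 ≤ N := le_max_right _ _
      have hSA := sum_map_eq_sortedDesc A f hf0 hNA
      have hSA' := sum_map_eq_sortedDesc A' f hf0 hNA'
      have key := hS b hb1
      rw [hSA, hSA'] at key
      have hA_eq : ∑ j ∈ Finset.range N, f (sortedDesc A j)
          = ∑ j ∈ Finset.range i, f (sortedDesc A j) := by
        refine (Finset.sum_subset (Finset.range_subset_range.mpr (le_trans (Nat.le_succ i) hNi)) ?_).symm
        intro x _ hx
        rw [Finset.mem_range, not_lt] at hx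
        have : sortedDesc A x < b := lt_of_le_of_lt (sortedDesc_anti A hx) hlt
        exact surjCount_eq_zero this
      have hA'_ge : ∑ j ∈ Finset.range (i + 1), f (sortedDesc A' j)
          ≤ ∑ j ∈ Finset.range N, f (sortedDesc A' j) :=
        Finset.sum_le_sum_of_subset (Finset.range_subset_range.mpr hNi)
      rw [Finset.sum_range_succ] at hA'_ge
      have hsame : ∑ j ∈ Finset.range i, f (sortedDesc A' j)
          = ∑ j ∈ Finset.range i, f (sortedDesc A j) :=
        Finset.sum_congr rfl fun j hj => by rw [hpre j (Finset.mem_range.mp hj)]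
      have hpos : 0 < f (sortedDesc A' i) := surjCount_pos b
      omega
    · exact Or.inr ⟨i, hpre, hgt⟩
  constructor
  · refine Or.inr ⟨0, fun j hj => absurd hj (Nat.not_lt_zero j), ?_⟩
    show sortedDesc [1, 1] 0 < sortedDesc [2] 0
    have e1 : sortedDesc [1, 1] 0 = 1 := by
      show ((([1, 1] : List ℕ) : Multiset ℕ).sort (· ≤ ·)).reverse.getD 0 0 = 1
      rw [sort_coe [1, 1] (by simp)]
      rfl
    have e2 : sortedDesc [2] 0 = 2 := by
      show ((([2] : List ℕ) : Multiset ℕ).sort (· ≤ ·)).reverse.getD 0 0 = 2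
      rw [sort_coe [2] (by simp)]
      rfl
    rw [e1, e2]
    norm_num
  · intro h
    have := h 1 le_rfl
    have h21 : surjCount 2 1 = 1 := surjCount_one (by norm_num)
    have h11 : surjCount 1 1 = 1 := surjCount_one le_rfl
    simp [h21, h11] at this
end
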